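/- Let n ≥ 1, m ≥ 1, N ≥ 1 be natural numbers and D a real number with 1 ≤ D ≤ 3, and set a := D(m−1)/(2Nm) (so that 2aN = D(m−1)/m), α_{n,m,D} := 2m/(2m(n+1) − D), α_{N+n,1,D} := 2/(2(N+n+1) − D), α_{n,1,D} := 2/(2(n+1) − D). Provided α_{N+n,1,D} − a·α_{n,m,D} ≠ 0, the following exponent identity holds: (4−D) α_{n,m,D} (1−a) α_{N+n,1,D} / ( α_{N+n,1,D} − a α_{n,m,D} ) = (4−D) α_{n,1,D}. -/

import Mathlib

/-!
Since `1 / α_{n,m,D} = (n + 1) − D / (2m)` is affine in `n` and in `1 / m`, the choice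
`2aN = D(m−1)/m` is exactly what makes `(1 − a) / α_{n,1,D} = 1 / α_{n,m,D} − a / α_{N+n,1,D}`;
clearing denominators in this relation gives the identity.
-/

/-- `α_{n,m,D}`. -/
noncomputable def alpha (n m : ℕ) (D : ℝ) : ℝ :=
  2 * (m : ℝ) / (2 * (m : ℝ) * ((n : ℝ) + 1) - D)

lemma alpha_one (n : ℕ) (D : ℝ) : alpha n 1 D = 2 / (2 * ((n : ℝ) + 1) - D) := by
  simp [alpha]

lemma alpha_pos {n m : ℕ} {D : ℝ} (hm : 0 < m) (hD : D < 2 * m * ((n : ℝ) + 1)) :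
    0 < alpha n m D :=
  div_pos (by positivity) (sub_pos.mpr hD)

-- Holds even where `2m(n+1) = D`, since there both sides vanish.
lemma inv_alpha {n m : ℕ} (D : ℝ) (hm : m ≠ 0) :
    (alpha n m D)⁻¹ = (n : ℝ) + 1 - D / (2 * m) := by
  have hm' : (m : ℝ) ≠ 0 := by exact_mod_cast hm
  rw [alpha, inv_div]
  field_simp

lemma one_sub_mul_inv_alpha_eq {n m N : ℕ} {D a : ℝ} (hm : m ≠ 0)
    (ha : 2 * a * N = D * ((m : ℝ) - 1) / m) :
    (1 - a) * (alpha n 1 D)⁻¹ = (alpha n m D)⁻¹ - a * (alpha (N + n) 1 D)⁻¹ := by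
  have hm' : (m : ℝ) ≠ 0 := by exact_mod_cast hm
  rw [inv_alpha D hm, inv_alpha D one_ne_zero, inv_alpha D one_ne_zero]
  field_simp at ha ⊢
  push_cast
  linear_combination ha

lemma mul_one_sub_mul_div_sub_eq_of_inv_eq {x y z a : ℝ} (hx : x ≠ 0) (hy : y ≠ 0)
    (h : (1 - a) * z⁻¹ = x⁻¹ - a * y⁻¹) (hden : y - a * x ≠ 0) :
    x * (1 - a) * y / (y - a * x) = z := by
  have hxy : y - a * x = x * y * ((1 - a) * z⁻¹) := by
    rw [h]
    field_simp
  have hne : (1 - a) * z⁻¹ ≠ 0 := fun h0 => hden (by rw [hxy, h0, mul_zero])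
  obtain ⟨h1a, hz⟩ := mul_ne_zero_iff.mp hne
  simp only [ne_eq, inv_eq_zero] at hz
  rw [hxy]
  field_simp

theorem exponent_identity_GN_lift_general
    (n m N : ℕ) (hn : 1 ≤ n) (hm : 1 ≤ m) (hN : 1 ≤ N)
    (D : ℝ) (hD3 : D ≤ 3)
    (a αnm αNn1 αn1 : ℝ)
    (ha : a = D * ((m : ℝ) - 1) / (2 * (N : ℝ) * (m : ℝ)))
    (hαnm : αnm = 2 * (m : ℝ) / (2 * (m : ℝ) * ((n : ℝ) + 1) - D))
    (hαNn1 : αNn1 = 2 / (2 * ((N : ℝ) + (n : ℝ) + 1) - D))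
    (hαn1 : αn1 = 2 / (2 * ((n : ℝ) + 1) - D))
    (hden : αNn1 - a * αnm ≠ 0) :
    (4 - D) * αnm * (1 - a) * αNn1 / (αNn1 - a * αnm) = (4 - D) * αn1 := by
  have hαnm' : αnm = alpha n m D := hαnm
  have hαNn1' : αNn1 = alpha (N + n) 1 D := by rw [hαNn1, alpha_one]; push_cast; rfl
  have hαn1' : αn1 = alpha n 1 D := by rw [hαn1, alpha_one]
  have hN' : (N : ℝ) ≠ 0 := by positivity
  have ha' : 2 * a * N = D * ((m : ℝ) - 1) / m := by rw [ha]; field_simp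
  have hrel := one_sub_mul_inv_alpha_eq (n := n) (m := m) (by omega) ha'
  subst hαnm' hαNn1' hαn1'
  have hm' : (1 : ℝ) ≤ m := by exact_mod_cast hm
  have hn' : (1 : ℝ) ≤ n := by exact_mod_cast hn
  have hpos_nm : 0 < alpha n m D := alpha_pos (by omega) (by nlinarith)
  have hpos_Nn1 : 0 < alpha (N + n) 1 D := alpha_pos one_pos (by push_cast; linarith)
  rw [← mul_one_sub_mul_div_sub_eq_of_inv_eq hpos_nm.ne' hpos_Nn1.ne' hrel hden]
  ring

/-- The exponent identity lifting the D-dimensional bound from `m = 1` to general `m`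
via Gagliardo–Nirenberg interpolation with parameter `a = D(m−1)/(2Nm)`:
`(4−D) α_{n,m,D} (1−a) α_{N+n,1,D} / (α_{N+n,1,D} − a α_{n,m,D}) = (4−D) α_{n,1,D}`. -/
theorem exponent_identity_GN_lift
    (n m N : ℕ) (hn : 1 ≤ n) (hm : 1 ≤ m) (hN : 1 ≤ N)
    (D : ℝ) (hD1 : 1 ≤ D) (hD3 : D ≤ 3)
    (a αnm αNn1 αn1 : ℝ)
    (ha : a = D * ((m : ℝ) - 1) / (2 * (N : ℝ) * (m : ℝ)))
    (hαnm : αnm = 2 * (m : ℝ) / (2 * (m : ℝ) * ((n : ℝ) + 1) - D))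
    (hαNn1 : αNn1 = 2 / (2 * ((N : ℝ) + (n : ℝ) + 1) - D))
    (hαn1 : αn1 = 2 / (2 * ((n : ℝ) + 1) - D))
    (hden : αNn1 - a * αnm ≠ 0) :
    (4 - D) * αnm * (1 - a) * αNn1 / (αNn1 - a * αnm) = (4 - D) * αn1 :=
  exponent_identity_GN_lift_general n m N hn hm hN D hD3 a αnm αNn1 αn1 ha hαnm hαNn1 hαn1 hden
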